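/- (Lazy Parry criterion.) Let β=(β_n)_{n∈ℕ} be a Cantor base with x_β<+∞ and let a be an infinite word over ℕ. Then: (1) a∈D'_β if and only if a_n∈[[0,⌈β_n⌉−1]] for all n∈ℕ and σ^n(a) >_lex ℓ*_{β^(n)}(x_{β^(n)}−1) for all n∈ℕ; (2) a∈S'_β if and only if a_n∈[[0,⌈β_n⌉−1]] for all n∈ℕ and σ^n(a) ≥_lex ℓ*_{β^(n)}(x_{β^(n)}−1) for all n∈ℕ. -/

import Mathlib

open Filter Topology

/-- A Cantor real base: a sequence of reals `> 1` whose infinite product diverges to `+∞`. -/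
structure IsCantorBase (β : ℕ → ℝ) : Prop where
  one_lt : ∀ n, 1 < β n
  prod_tendsto : Tendsto (fun N => ∏ i ∈ Finset.range N, β i) atTop atTop

/-- The product `β_0 ⋯ β_n`. -/
noncomputable def prodUpTo (β : ℕ → ℝ) (n : ℕ) : ℝ := ∏ i ∈ Finset.range (n + 1), β i

/-- The shifted base `β^(n) = (β_n, β_{n+1}, …)`. -/
def shiftBase (β : ℕ → ℝ) (n : ℕ) : ℕ → ℝ := fun m => β (n + m)

/-- `x_β = Σ_{n} (⌈β_n⌉ - 1)/(β_0 ⋯ β_n)`. -/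
noncomputable def xB (β : ℕ → ℝ) : ℝ := ∑' n, ((⌈β n⌉ : ℝ) - 1) / prodUpTo β n

/-- The condition `x_β < +∞`, i.e. the series defining `x_β` converges. -/
def XBSummable (β : ℕ → ℝ) : Prop :=
  Summable (fun n => ((⌈β n⌉ : ℝ) - 1) / prodUpTo β n)

/-- `val_β(a) = Σ_n a_n/(β_0 ⋯ β_n)`. -/
noncomputable def valB (β : ℕ → ℝ) (a : ℕ → ℤ) : ℝ := ∑' n, (a n : ℝ) / prodUpTo β n

/-- The digit condition `a_n ∈ [[0, ⌈β_n⌉ - 1]]` for all `n`. -/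
def validWord (β : ℕ → ℝ) (a : ℕ → ℤ) : Prop := ∀ n, 0 ≤ a n ∧ a n ≤ ⌈β n⌉ - 1

/-- The flip map `θ_β`. -/
noncomputable def theta (β : ℕ → ℝ) (a : ℕ → ℤ) : ℕ → ℤ := fun n => ⌈β n⌉ - 1 - a n

/-- The greedy remainders `r_{β,n}(x)`. -/
noncomputable def greedyR (β : ℕ → ℝ) (x : ℝ) : ℕ → ℝ
  | 0 => β 0 * x - (⌊β 0 * x⌋ : ℝ)
  | n + 1 => β (n + 1) * greedyR β x n - (⌊β (n + 1) * greedyR β x n⌋ : ℝ)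

/-- The greedy digits `ε_{β,n}(x)`; `greedyDigit β x` is the greedy β-expansion `d_β(x)`. -/
noncomputable def greedyDigit (β : ℕ → ℝ) (x : ℝ) : ℕ → ℤ
  | 0 => ⌊β 0 * x⌋
  | n + 1 => ⌊β (n + 1) * greedyR β x n⌋

/-- The lazy remainders `s_{β,n}(x)`. -/
noncomputable def lazyS (β : ℕ → ℝ) (x : ℝ) : ℕ → ℝ
  | 0 => β 0 * x - (⌈β 0 * x - xB (shiftBase β 1)⌉ : ℝ)
  | n + 1 => β (n + 1) * lazyS β x n -
      (⌈β (n + 1) * lazyS β x n - xB (shiftBase β (n + 2))⌉ : ℝ)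

/-- The lazy digits `ξ_{β,n}(x)`; `lazyDigit β x` is the lazy β-expansion `ℓ_β(x)`. -/
noncomputable def lazyDigit (β : ℕ → ℝ) (x : ℝ) : ℕ → ℤ
  | 0 => ⌈β 0 * x - xB (shiftBase β 1)⌉
  | n + 1 => ⌈β (n + 1) * lazyS β x n - xB (shiftBase β (n + 2))⌉

/-- Strict lexicographic order on infinite words. -/
def lexLt (a b : ℕ → ℤ) : Prop := ∃ k, (∀ i < k, a i = b i) ∧ a k < b k

/-- Lexicographic order on infinite words. -/
def lexLe (a b : ℕ → ℤ) : Prop := lexLt a b ∨ a = b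

/-- `D_β`, the set of greedy β-expansions of points of `[0,1)`. -/
def greedySet (β : ℕ → ℝ) : Set (ℕ → ℤ) :=
  {a | ∃ x ∈ Set.Ico (0 : ℝ) 1, a = greedyDigit β x}

/-- `D'_β`, the set of lazy β-expansions of points of `(x_β - 1, x_β]`. -/
def lazySet (β : ℕ → ℝ) : Set (ℕ → ℤ) :=
  {a | ∃ x ∈ Set.Ioc (xB β - 1) (xB β), a = lazyDigit β x}

/-- `Δ'_β = ⋃_n D'_{β^(n)}`. -/
def deltaSet (β : ℕ → ℝ) : Set (ℕ → ℤ) := ⋃ n, lazySet (shiftBase β n)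

/-!
An admissible word `a` has a value `val_β(a) ∈ [0, x_β]`, and the lazy expansion of
`x ∈ (x_β - 1, x_β]` is the admissible word of value `x` whose tails all satisfy
`val_{β^(n)}(σ^n a) > x_{β^(n)} - 1`. The lazy expansion is lexicographically strictly increasing
in `x`, so its right limit `ℓ*` at `x_β - 1` lies strictly below every lazy expansion; since `val`
is continuous on admissible words, `ℓ*` has value `x_β - 1`, and hence no tail of `ℓ*` is maximal.

Conversely, if `σ^n a > ℓ*_{β^(n)}` for all `n`, comparing the two words at their first difference
shows that the normalised defect `(x_{β^(n)} - 1 - val(σ^n a)) / (β_0 ⋯ β_{n-1})` increases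
strictly from `n` to some later index, while it is bounded by the tail `x_{β^(n)} / (β_0 ⋯ β_{n-1})`
of the series of `x_β`, which tends to `0`. So every defect is negative, which is the tail
condition characterising lazy expansions. For the closure, the weak inequalities cut out a closed
set, and an admissible word satisfying them is the limit of its prefixes completed by maximal
digits, which satisfy the strict inequalities because `ℓ*` has no maximal tail.
-/

open Set

theorem lexLt_iff_toLex_lt {a b : ℕ → ℤ} : lexLt a b ↔ toLex a < toLex b := Iff.rfl

theorem lexLe_iff_toLex_le {a b : ℕ → ℤ} : lexLe a b ↔ toLex a ≤ toLex b := by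
  rw [lexLe, lexLt_iff_toLex_lt, le_iff_lt_or_eq]
  exact Iff.rfl

theorem eventually_forall_lt_apply_eq {α X : Type*} [TopologicalSpace X] [DiscreteTopology X]
    {l : Filter α} {f : α → ℕ → X} {a : ℕ → X} (h : Tendsto f l (𝓝 a)) (K : ℕ) :
    ∀ᶠ t in l, ∀ i < K, f t i = a i := by
  have hi : ∀ i, ∀ᶠ t in l, f t i = a i := fun i => by
    simpa [nhds_discrete] using tendsto_pi_nhds.mp h i
  exact (Set.finite_lt_nat K).eventually_all.mpr fun i _ => hi i

theorem isOpen_lexLt : IsOpen {p : (ℕ → ℤ) × (ℕ → ℤ) | lexLt p.1 p.2} := by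
  refine isOpen_iff_mem_nhds.mpr fun p ⟨k, hpre, hk⟩ => ?_
  filter_upwards [eventually_forall_lt_apply_eq (continuous_fst.tendsto p) (k + 1),
    eventually_forall_lt_apply_eq (continuous_snd.tendsto p) (k + 1)] with q h1 h2
  refine ⟨k, fun i hi => ?_, ?_⟩
  · rw [h1 i (by omega), h2 i (by omega), hpre i hi]
  · rw [h1 k k.lt_succ_self, h2 k k.lt_succ_self]; exact hk

theorem isClosed_lexLe {X : Type*} [TopologicalSpace X] {f g : X → ℕ → ℤ}
    (hf : Continuous f) (hg : Continuous g) : IsClosed {x | lexLe (f x) (g x)} := by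
  have : {p : (ℕ → ℤ) × (ℕ → ℤ) | lexLe p.1 p.2} = (Prod.swap ⁻¹' {p | lexLt p.1 p.2})ᶜ := by
    ext p
    exact lexLe_iff_toLex_le.trans not_lt.symm
  have hclosed : IsClosed {p : (ℕ → ℤ) × (ℕ → ℤ) | lexLe p.1 p.2} := by
    rw [this]
    exact (isOpen_lexLt.preimage continuous_swap).isClosed_compl
  exact hclosed.preimage (hf.prodMk hg)

section

variable {β : ℕ → ℝ} {a c : ℕ → ℤ} {ℓstar : ℕ → ℕ → ℤ}

noncomputable def prodBelow (β : ℕ → ℝ) (n : ℕ) : ℝ := ∏ i ∈ Finset.range n, β i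

def shiftWord {α : Type*} (a : ℕ → α) (n : ℕ) : ℕ → α := fun m => a (n + m)

noncomputable def maxWord (β : ℕ → ℝ) : ℕ → ℤ := fun n => ⌈β n⌉ - 1

theorem IsCantorBase.pos (hβ : IsCantorBase β) (n : ℕ) : 0 < β n :=
  one_pos.trans (hβ.one_lt n)

theorem prodUpTo_eq_prodBelow (β : ℕ → ℝ) (n : ℕ) : prodUpTo β n = prodBelow β (n + 1) := rfl

theorem prodBelow_succ (β : ℕ → ℝ) (n : ℕ) : prodBelow β (n + 1) = prodBelow β n * β n :=
  Finset.prod_range_succ _ _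

theorem prodBelow_pos (hβ : IsCantorBase β) (n : ℕ) : 0 < prodBelow β n :=
  Finset.prod_pos fun i _ => hβ.pos i

theorem prodUpTo_pos (hβ : IsCantorBase β) (n : ℕ) : 0 < prodUpTo β n :=
  prodBelow_pos hβ (n + 1)

theorem prodBelow_add (β : ℕ → ℝ) (n m : ℕ) :
    prodBelow β (n + m) = prodBelow β n * prodBelow (shiftBase β n) m :=
  Finset.prod_range_add _ _ _

theorem prodUpTo_add (β : ℕ → ℝ) (n m : ℕ) :
    prodUpTo β (n + m) = prodBelow β n * prodUpTo (shiftBase β n) m :=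
  prodBelow_add β n (m + 1)

@[simp]
theorem shiftBase_zero (β : ℕ → ℝ) : shiftBase β 0 = β := funext fun m => by simp [shiftBase]

@[simp]
theorem shiftBase_shiftBase (β : ℕ → ℝ) (n m : ℕ) :
    shiftBase (shiftBase β n) m = shiftBase β (n + m) :=
  funext fun k => by simp [shiftBase, Nat.add_assoc]

@[simp]
theorem shiftWord_zero {α : Type*} (a : ℕ → α) : shiftWord a 0 = a :=
  funext fun m => by simp [shiftWord]

@[simp]
theorem shiftWord_shiftWord {α : Type*} (a : ℕ → α) (n m : ℕ) :
    shiftWord (shiftWord a n) m = shiftWord a (n + m) :=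
  funext fun k => by simp [shiftWord, Nat.add_assoc]

theorem continuous_shiftWord {α : Type*} [TopologicalSpace α] (n : ℕ) :
    Continuous fun a : ℕ → α => shiftWord a n :=
  continuous_pi fun m => continuous_apply (n + m)

theorem shiftWord_maxWord (β : ℕ → ℝ) (n : ℕ) :
    shiftWord (maxWord β) n = maxWord (shiftBase β n) := rfl

theorem IsCantorBase.shift (hβ : IsCantorBase β) (n : ℕ) : IsCantorBase (shiftBase β n) := by
  refine ⟨fun m => hβ.one_lt (n + m), ?_⟩
  have h := hβ.prod_tendsto.comp (tendsto_add_atTop_nat n)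
  simp only [Function.comp_def, add_comm _ n] at h
  exact (tendsto_const_mul_atTop_of_pos (prodBelow_pos hβ n)).mp
    (h.congr fun N => prodBelow_add β n N)

theorem summable_shift (hβ : IsCantorBase β) {c : ℕ → ℝ}
    (hc : Summable fun i => c i / prodUpTo β i) (n : ℕ) :
    Summable fun m => c (n + m) / prodUpTo (shiftBase β n) m := by
  have h := ((summable_nat_add_iff n).mpr hc).mul_left (prodBelow β n)
  refine h.congr fun m => ?_
  rw [add_comm m n, prodUpTo_add]
  field_simp [(prodBelow_pos hβ n).ne']

theorem XBSummable.shift (hβ : IsCantorBase β) (hx : XBSummable β) (n : ℕ) :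
    XBSummable (shiftBase β n) :=
  summable_shift hβ (c := fun i => (⌈β i⌉ : ℝ) - 1) hx n

theorem xB_eq_valB_maxWord (β : ℕ → ℝ) : xB β = valB β (maxWord β) := by
  simp [xB, valB, maxWord]

theorem XBSummable.summable_maxWord (hx : XBSummable β) :
    Summable fun n => (maxWord β n : ℝ) / prodUpTo β n := by
  simpa [maxWord, XBSummable] using hx

theorem validWord_maxWord (hβ : IsCantorBase β) : validWord β (maxWord β) := fun n => by
  have : (1 : ℤ) < ⌈β n⌉ := Int.lt_ceil.mpr (by exact_mod_cast hβ.one_lt n)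
  exact ⟨by simp only [maxWord]; omega, le_rfl⟩

theorem validWord.shift (ha : validWord β a) (n : ℕ) :
    validWord (shiftBase β n) (shiftWord a n) := fun m => ha (n + m)

theorem validWord.term_nonneg (hβ : IsCantorBase β) (ha : validWord β a) (n : ℕ) :
    0 ≤ (a n : ℝ) / prodUpTo β n :=
  div_nonneg (by exact_mod_cast (ha n).1) (prodUpTo_pos hβ n).le

theorem validWord.term_le (hβ : IsCantorBase β) (ha : validWord β a) (n : ℕ) :
    (a n : ℝ) / prodUpTo β n ≤ (maxWord β n : ℝ) / prodUpTo β n :=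
  div_le_div_of_nonneg_right (by exact_mod_cast (ha n).2) (prodUpTo_pos hβ n).le

theorem validWord.summable (hβ : IsCantorBase β) (hx : XBSummable β) (ha : validWord β a) :
    Summable fun n => (a n : ℝ) / prodUpTo β n :=
  hx.summable_maxWord.of_nonneg_of_le (ha.term_nonneg hβ) (ha.term_le hβ)

theorem valB_nonneg (hβ : IsCantorBase β) (ha : validWord β a) : 0 ≤ valB β a :=
  tsum_nonneg (ha.term_nonneg hβ)

theorem valB_le_xB (hβ : IsCantorBase β) (hx : XBSummable β) (ha : validWord β a) :
    valB β a ≤ xB β := by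
  rw [xB_eq_valB_maxWord]
  exact (ha.summable hβ hx).tsum_le_tsum (ha.term_le hβ) hx.summable_maxWord

theorem valB_shift_div (β : ℕ → ℝ) (a : ℕ → ℤ) (k : ℕ) :
    valB (shiftBase β k) (shiftWord a k) / prodBelow β k
      = ∑' i, (a (i + k) : ℝ) / prodUpTo β (i + k) := by
  rw [valB, ← tsum_div_const]
  refine tsum_congr fun i => ?_
  rw [add_comm i k, prodUpTo_add, div_div, mul_comm]
  rfl

theorem valB_eq_sum_add (hs : Summable fun n => (a n : ℝ) / prodUpTo β n) (k : ℕ) :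
    valB β a = ∑ i ∈ Finset.range k, (a i : ℝ) / prodUpTo β i
      + valB (shiftBase β k) (shiftWord a k) / prodBelow β k := by
  rw [valB_shift_div, hs.sum_add_tsum_nat_add]
  rfl

theorem tendsto_valB_shift_div (β : ℕ → ℝ) (a : ℕ → ℤ) :
    Tendsto (fun k => valB (shiftBase β k) (shiftWord a k) / prodBelow β k) atTop (𝓝 0) := by
  simpa only [valB_shift_div] using tendsto_sum_nat_add fun i => (a i : ℝ) / prodUpTo β i

theorem mul_valB (hβ : IsCantorBase β)
    (hs : Summable fun n => (a n : ℝ) / prodUpTo β n) :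
    β 0 * valB β a = a 0 + valB (shiftBase β 1) (shiftWord a 1) := by
  have h := valB_eq_sum_add hs 1
  simp only [Finset.sum_range_one, prodUpTo, prodBelow, zero_add, Finset.prod_range_one] at h
  rw [h]
  field_simp [(hβ.pos 0).ne']

theorem xB_shift_eq_valB (β : ℕ → ℝ) (n : ℕ) :
    xB (shiftBase β n) = valB (shiftBase β n) (shiftWord (maxWord β) n) := by
  rw [shiftWord_maxWord, xB_eq_valB_maxWord]

theorem mul_valB_shift (hβ : IsCantorBase β) (hx : XBSummable β) (ha : validWord β a) (n : ℕ) :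
    β n * valB (shiftBase β n) (shiftWord a n)
      = a n + valB (shiftBase β (n + 1)) (shiftWord a (n + 1)) := by
  have h := mul_valB (hβ.shift n)
    ((ha.shift n).summable (hβ.shift n) (hx.shift hβ n))
  simpa [shiftBase, shiftWord] using h

theorem mul_xB_shift (hβ : IsCantorBase β) (hx : XBSummable β) (n : ℕ) :
    β n * xB (shiftBase β n) = ((⌈β n⌉ : ℝ) - 1) + xB (shiftBase β (n + 1)) := by
  simpa [xB_shift_eq_valB, maxWord] using mul_valB_shift hβ hx (validWord_maxWord hβ) n

theorem tendsto_xB_shift_div (β : ℕ → ℝ) :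
    Tendsto (fun k => xB (shiftBase β k) / prodBelow β k) atTop (𝓝 0) := by
  simpa only [xB_shift_eq_valB] using tendsto_valB_shift_div β (maxWord β)

theorem continuousOn_valB (hβ : IsCantorBase β) (hx : XBSummable β) :
    ContinuousOn (valB β) {a | validWord β a} := by
  refine continuousOn_tsum (fun n => ?_) hx.summable_maxWord fun n a ha => ?_
  · exact ((continuous_of_discreteTopology.comp (continuous_apply n)).div_const _).continuousOn
  · rw [Real.norm_of_nonneg (validWord.term_nonneg hβ ha n)]
    exact validWord.term_le hβ ha n

noncomputable def lazyState (β : ℕ → ℝ) (x : ℝ) : ℕ → ℝ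
  | 0 => x
  | n + 1 => lazyS β x n

theorem lazyDigit_eq_ceil (β : ℕ → ℝ) (x : ℝ) (n : ℕ) :
    lazyDigit β x n = ⌈β n * lazyState β x n - xB (shiftBase β (n + 1))⌉ := by
  cases n <;> rfl

theorem lazyState_succ (β : ℕ → ℝ) (x : ℝ) (n : ℕ) :
    lazyState β x (n + 1) = β n * lazyState β x n - lazyDigit β x n := by
  cases n <;> rfl

theorem lazyState_shift (β : ℕ → ℝ) (x : ℝ) (n m : ℕ) :
    lazyState (shiftBase β n) (lazyState β x n) m = lazyState β x (n + m) := by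
  induction m with
  | zero => rfl
  | succ m ih =>
    rw [lazyState_succ, lazyDigit_eq_ceil, ih, shiftBase_shiftBase, ← add_assoc,
      lazyState_succ, lazyDigit_eq_ceil]
    rfl

theorem lazyDigit_shift (β : ℕ → ℝ) (x : ℝ) (n : ℕ) :
    lazyDigit (shiftBase β n) (lazyState β x n) = shiftWord (lazyDigit β x) n := by
  funext m
  rw [lazyDigit_eq_ceil, lazyState_shift, shiftBase_shiftBase, shiftWord, lazyDigit_eq_ceil,
    ← add_assoc]
  rfl

theorem mul_sub_xB_mem_Ioc (hβ : IsCantorBase β) (hx : XBSummable β) {n : ℕ} {y : ℝ}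
    (hy : y ∈ Ioc (xB (shiftBase β n) - 1) (xB (shiftBase β n))) :
    β n * y - xB (shiftBase β (n + 1)) ∈ Ioc (-1) ((⌈β n⌉ : ℝ) - 1) := by
  have hrec := mul_xB_shift hβ hx n
  have hceil := Int.le_ceil (β n)
  have hpos := hβ.pos n
  constructor <;> nlinarith [hy.1, hy.2]

theorem lazyState_mem_Ioc (hβ : IsCantorBase β) (hx : XBSummable β) {x : ℝ}
    (hxm : x ∈ Ioc (xB β - 1) (xB β)) (n : ℕ) :
    lazyState β x n ∈ Ioc (xB (shiftBase β n) - 1) (xB (shiftBase β n)) := by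
  induction n with
  | zero => rw [shiftBase_zero]; exact hxm
  | succ n ih =>
    have hz := (mul_sub_xB_mem_Ioc hβ hx ih).1
    rw [lazyState_succ, lazyDigit_eq_ceil]
    constructor
    · linarith [Int.ceil_lt_add_one (β n * lazyState β x n - xB (shiftBase β (n + 1)))]
    · linarith [Int.le_ceil (β n * lazyState β x n - xB (shiftBase β (n + 1)))]

theorem validWord_lazyDigit (hβ : IsCantorBase β) (hx : XBSummable β) {x : ℝ}
    (hxm : x ∈ Ioc (xB β - 1) (xB β)) : validWord β (lazyDigit β x) := fun n => by
  obtain ⟨hlo, hhi⟩ := mul_sub_xB_mem_Ioc hβ hx (lazyState_mem_Ioc hβ hx hxm n)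
  rw [lazyDigit_eq_ceil]
  refine ⟨?_, Int.ceil_le.mpr (by push_cast; exact hhi)⟩
  have : (-1 : ℤ) < ⌈β n * lazyState β x n - xB (shiftBase β (n + 1))⌉ :=
    Int.lt_ceil.mpr (by exact_mod_cast hlo)
  omega

theorem eq_sum_add_lazyState (hβ : IsCantorBase β) (x : ℝ) (n : ℕ) :
    x = ∑ i ∈ Finset.range n, (lazyDigit β x i : ℝ) / prodUpTo β i
      + lazyState β x n / prodBelow β n := by
  induction n with
  | zero => simp [prodBelow, lazyState]
  | succ n ih =>
    have := prodBelow_pos hβ n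
    have := hβ.pos n
    rw [Finset.sum_range_succ, lazyState_succ, prodUpTo_eq_prodBelow, prodBelow_succ]
    conv_lhs => rw [ih]
    field_simp
    ring

theorem valB_lazyDigit (hβ : IsCantorBase β) (hx : XBSummable β) {x : ℝ}
    (hxm : x ∈ Ioc (xB β - 1) (xB β)) : valB β (lazyDigit β x) = x := by
  have hsq : Tendsto (fun n => lazyState β x n / prodBelow β n) atTop (𝓝 0) := by
    refine tendsto_of_tendsto_of_tendsto_of_le_of_le (g := fun n => (xB (shiftBase β n) - 1) /
      prodBelow β n) ?_ (tendsto_xB_shift_div β) (fun n => ?_) (fun n => ?_)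
    · have hinv : Tendsto (fun n => 1 / prodBelow β n) atTop (𝓝 0) :=
        tendsto_const_nhds.div_atTop hβ.prod_tendsto
      simpa only [sub_div, sub_zero] using (tendsto_xB_shift_div β).sub hinv
    · exact div_le_div_of_nonneg_right (lazyState_mem_Ioc hβ hx hxm n).1.le
        (prodBelow_pos hβ n).le
    · exact div_le_div_of_nonneg_right (lazyState_mem_Ioc hβ hx hxm n).2 (prodBelow_pos hβ n).le
  have hpartial : Tendsto (fun n => ∑ i ∈ Finset.range n, (lazyDigit β x i : ℝ) / prodUpTo β i)
      atTop (𝓝 x) := by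
    have h := (tendsto_const_nhds (x := x)).sub hsq
    rw [sub_zero] at h
    refine h.congr fun n => ?_
    linarith [eq_sum_add_lazyState hβ x n]
  exact (((validWord_lazyDigit hβ hx hxm).summable hβ hx).hasSum_iff_tendsto_nat.mpr
    hpartial).tsum_eq

theorem lexLt_lazyDigit_of_lt (hβ : IsCantorBase β) (hx : XBSummable β) {x y : ℝ}
    (hxm : x ∈ Ioc (xB β - 1) (xB β)) (hym : y ∈ Ioc (xB β - 1) (xB β)) (hxy : x < y) :
    lexLt (lazyDigit β x) (lazyDigit β y) := by
  rcases lt_trichotomy (toLex (lazyDigit β x)) (toLex (lazyDigit β y)) with h | h | h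
  · exact h
  · have h' := congrArg (valB β) (toLex_inj.mp h)
    rw [valB_lazyDigit hβ hx hxm, valB_lazyDigit hβ hx hym] at h'
    exact absurd h' hxy.ne
  · obtain ⟨k, hpre, hk⟩ : lexLt (lazyDigit β y) (lazyDigit β x) := h
    have hsum : ∑ i ∈ Finset.range k, (lazyDigit β x i : ℝ) / prodUpTo β i
        = ∑ i ∈ Finset.range k, (lazyDigit β y i : ℝ) / prodUpTo β i :=
      Finset.sum_congr rfl fun i hi => by rw [← hpre i (Finset.mem_range.mp hi)]
    have hstate : lazyState β x k < lazyState β y k := by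
      have := eq_sum_add_lazyState hβ x k
      have := eq_sum_add_lazyState hβ y k
      exact (div_lt_div_iff_of_pos_right (prodBelow_pos hβ k)).mp (by linarith)
    have hdigit : lazyDigit β x k ≤ lazyDigit β y k := by
      rw [lazyDigit_eq_ceil, lazyDigit_eq_ceil]
      exact Int.ceil_mono (by nlinarith [hβ.pos k])
    exact absurd hk hdigit.not_gt

theorem isClosed_setOf_validWord (β : ℕ → ℝ) : IsClosed {a | validWord β a} := by
  simp only [validWord, ofPred_forall]
  exact isClosed_iInter fun n =>
    (isClosed_discrete (Icc 0 (⌈β n⌉ - 1))).preimage (continuous_apply (A := fun _ => ℤ) n)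

def IsQuasiLazyExpansion (β : ℕ → ℝ) (c : ℕ → ℤ) : Prop :=
  Tendsto (lazyDigit β) (𝓝[>] (xB β - 1)) (𝓝 c)

theorem eventually_mem_Ioc_xB (β : ℕ → ℝ) :
    ∀ᶠ t in 𝓝[>] (xB β - 1), t ∈ Ioc (xB β - 1) (xB β) :=
  Ioc_mem_nhdsGT (sub_one_lt _)

theorem IsQuasiLazyExpansion.validWord (hβ : IsCantorBase β) (hx : XBSummable β)
    (hc : IsQuasiLazyExpansion β c) : validWord β c :=
  (isClosed_setOf_validWord β).mem_of_tendsto hc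
    ((eventually_mem_Ioc_xB β).mono fun _ ht => validWord_lazyDigit hβ hx ht)

theorem IsQuasiLazyExpansion.valB_eq (hβ : IsCantorBase β) (hx : XBSummable β)
    (hc : IsQuasiLazyExpansion β c) : valB β c = xB β - 1 := by
  have hvalid := (eventually_mem_Ioc_xB β).mono fun _ ht => validWord_lazyDigit hβ hx ht
  have hlim : Tendsto (fun t => valB β (lazyDigit β t)) (𝓝[>] (xB β - 1)) (𝓝 (valB β c)) :=
    ((continuousOn_valB hβ hx) c (hc.validWord hβ hx)).tendsto.comp
      (tendsto_nhdsWithin_iff.mpr ⟨hc, hvalid⟩)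
  refine tendsto_nhds_unique hlim (tendsto_nhdsWithin_of_tendsto_nhds tendsto_id |>.congr' ?_)
  exact (eventually_mem_Ioc_xB β).mono fun t ht => (valB_lazyDigit hβ hx ht).symm

theorem IsQuasiLazyExpansion.lexLe_lazyDigit (hβ : IsCantorBase β) (hx : XBSummable β)
    (hc : IsQuasiLazyExpansion β c) {t : ℝ} (ht : t ∈ Ioc (xB β - 1) (xB β)) :
    lexLe c (lazyDigit β t) := by
  refine (isClosed_lexLe continuous_id continuous_const).mem_of_tendsto hc ?_
  filter_upwards [Ioo_mem_nhdsGT ht.1] with s hs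
  exact Or.inl (lexLt_lazyDigit_of_lt hβ hx ⟨hs.1, hs.2.le.trans ht.2⟩ ht hs.2)

theorem IsQuasiLazyExpansion.lexLt_lazyDigit (hβ : IsCantorBase β) (hx : XBSummable β)
    (hc : IsQuasiLazyExpansion β c) {t : ℝ} (ht : t ∈ Ioc (xB β - 1) (xB β)) :
    lexLt c (lazyDigit β t) := by
  obtain ⟨s, hs, hst⟩ := exists_between ht.1
  have hsm : s ∈ Ioc (xB β - 1) (xB β) := ⟨hs, hst.le.trans ht.2⟩
  exact lt_of_le_of_lt (lexLe_iff_toLex_le.mp (hc.lexLe_lazyDigit hβ hx hsm))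
    (lexLt_lazyDigit_of_lt hβ hx hsm ht hst)

theorem IsQuasiLazyExpansion.valB_shift_lt (hβ : IsCantorBase β) (hx : XBSummable β)
    (hc : IsQuasiLazyExpansion β c) (K : ℕ) :
    valB (shiftBase β K) (shiftWord c K) < xB (shiftBase β K) := by
  obtain ⟨t, hpre, ht⟩ :=
    ((eventually_forall_lt_apply_eq hc K).and (eventually_mem_Ioc_xB β)).exists
  have hvalid := validWord_lazyDigit hβ hx ht
  have hc' := valB_eq_sum_add ((hc.validWord hβ hx).summable hβ hx) K
  have ht' := valB_eq_sum_add (hvalid.summable hβ hx) K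
  have hsum : ∑ i ∈ Finset.range K, (lazyDigit β t i : ℝ) / prodUpTo β i
      = ∑ i ∈ Finset.range K, (c i : ℝ) / prodUpTo β i :=
    Finset.sum_congr rfl fun i hi => by rw [hpre i (Finset.mem_range.mp hi)]
  rw [hc.valB_eq hβ hx] at hc'
  rw [valB_lazyDigit hβ hx ht, hsum] at ht'
  have hlt : valB (shiftBase β K) (shiftWord c K)
      < valB (shiftBase β K) (shiftWord (lazyDigit β t) K) :=
    (div_lt_div_iff_of_pos_right (prodBelow_pos hβ K)).mp (by linarith [ht.1])
  exact hlt.trans_le (valB_le_xB (hβ.shift K) (hx.shift hβ K) (hvalid.shift K))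

theorem IsQuasiLazyExpansion.exists_lt_maxWord (hβ : IsCantorBase β) (hx : XBSummable β)
    (hc : IsQuasiLazyExpansion β c) (J : ℕ) : ∃ i, J ≤ i ∧ c i < maxWord β i := by
  by_contra! hmax
  have htail : shiftWord c J = maxWord (shiftBase β J) :=
    funext fun i => le_antisymm ((hc.validWord hβ hx) (J + i)).2 (hmax (J + i) (by omega))
  have := hc.valB_shift_lt hβ hx J
  rw [htail, ← xB_eq_valB_maxWord] at this
  exact lt_irrefl _ this

theorem neg_of_forall_exists_lt_of_le_of_tendsto_zero {d u : ℕ → ℝ}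
    (hstep : ∀ n, ∃ m, n < m ∧ d n < d m) (hdu : ∀ n, d n ≤ u n)
    (hu : Tendsto u atTop (𝓝 0)) (n : ℕ) : d n < 0 := by
  have hreach : ∀ n N, ∃ m, N ≤ m ∧ d n ≤ d m := by
    intro n N
    induction N with
    | zero => exact ⟨n, n.zero_le, le_rfl⟩
    | succ N ih =>
      obtain ⟨m, hNm, hm⟩ := ih
      obtain ⟨m', hmm', hm'⟩ := hstep m
      exact ⟨m', by omega, hm.trans hm'.le⟩
  have hnonpos : ∀ n, d n ≤ 0 := by
    intro n
    by_contra! hpos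
    obtain ⟨N, hN⟩ := eventually_atTop.mp (hu.eventually (gt_mem_nhds hpos))
    obtain ⟨m, hNm, hm⟩ := hreach n N
    exact (hm.trans (hdu m)).not_gt (hN m hNm)
  obtain ⟨m, -, hm⟩ := hstep n
  exact hm.trans_le (hnonpos m)

theorem sum_add_inv_le_sum_of_lt {P : ℕ → ℝ} {u w : ℕ → ℤ} {k : ℕ} (hP : 0 < P k)
    (hpre : ∀ i < k, u i = w i) (hk : u k < w k) :
    ∑ i ∈ Finset.range (k + 1), (u i : ℝ) / P i + 1 / P k
      ≤ ∑ i ∈ Finset.range (k + 1), (w i : ℝ) / P i := by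
  have hsum : ∑ i ∈ Finset.range k, (u i : ℝ) / P i = ∑ i ∈ Finset.range k, (w i : ℝ) / P i :=
    Finset.sum_congr rfl fun i hi => by rw [hpre i (Finset.mem_range.mp hi)]
  have hdigit : (u k : ℝ) / P k + 1 / P k ≤ (w k : ℝ) / P k := by
    rw [← add_div]
    exact div_le_div_of_nonneg_right (by exact_mod_cast hk) hP.le
  rw [Finset.sum_range_succ, Finset.sum_range_succ, hsum]
  linarith

theorem valB_sub_valB_le_of_lt (hβ : IsCantorBase β) (hx : XBSummable β) {u w : ℕ → ℤ}
    (hu : validWord β u) (hw : validWord β w) {k : ℕ}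
    (hpre : ∀ i < k, u i = w i) (hk : u k < w k) :
    valB β u - valB β w ≤ (valB (shiftBase β (k + 1)) (shiftWord u (k + 1)) - 1
      - valB (shiftBase β (k + 1)) (shiftWord w (k + 1))) / prodBelow β (k + 1) := by
  have hsum := sum_add_inv_le_sum_of_lt (prodUpTo_pos hβ k) hpre hk
  rw [prodUpTo_eq_prodBelow] at hsum
  rw [valB_eq_sum_add (hu.summable hβ hx) (k + 1), valB_eq_sum_add (hw.summable hβ hx) (k + 1)]
  rw [sub_div, sub_div]
  linarith

theorem xB_sub_one_lt_valB_shift (hβ : IsCantorBase β) (hx : XBSummable β)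
    (hl : ∀ n, IsQuasiLazyExpansion (shiftBase β n) (ℓstar n)) (ha : validWord β a)
    (hlex : ∀ n, lexLt (ℓstar n) (shiftWord a n)) (n : ℕ) :
    xB (shiftBase β n) - 1 < valB (shiftBase β n) (shiftWord a n) := by
  set d : ℕ → ℝ := fun n =>
    (xB (shiftBase β n) - 1 - valB (shiftBase β n) (shiftWord a n)) / prodBelow β n with hd
  suffices d n < 0 by
    linarith [(div_lt_iff₀ (prodBelow_pos hβ n)).mp this]
  refine neg_of_forall_exists_lt_of_le_of_tendsto_zero (fun n => ?_) (fun n => ?_)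
    (tendsto_xB_shift_div β) n
  · obtain ⟨k, hpre, hk⟩ := hlex n
    have hβn := hβ.shift n
    have hxn := hx.shift hβ n
    have hstep := valB_sub_valB_le_of_lt hβn hxn ((hl n).validWord hβn hxn) (ha.shift n) hpre hk
    have htail := (hl n).valB_shift_lt hβn hxn (k + 1)
    rw [(hl n).valB_eq hβn hxn, shiftWord_shiftWord] at hstep
    rw [shiftBase_shiftBase] at hstep htail
    refine ⟨n + (k + 1), by omega, ?_⟩
    have hQ := prodBelow_pos hβn (k + 1)
    have hQn := prodBelow_pos hβ n
    simp only [hd]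
    rw [prodBelow_add β n (k + 1), mul_comm, ← div_div]
    refine div_lt_div_of_pos_right (hstep.trans_lt ?_) hQn
    exact div_lt_div_of_pos_right (by linarith) hQ
  · exact div_le_div_of_nonneg_right
      (by linarith [valB_nonneg (hβ.shift n) (ha.shift n)]) (prodBelow_pos hβ n).le

theorem lazyDigit_valB (hβ : IsCantorBase β) (hx : XBSummable β) (ha : validWord β a)
    (htail : ∀ n, xB (shiftBase β n) - 1 < valB (shiftBase β n) (shiftWord a n)) :
    lazyDigit β (valB β a) = a := by
  have hdigit : ∀ n, ⌈β n * valB (shiftBase β n) (shiftWord a n) - xB (shiftBase β (n + 1))⌉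
      = a n := fun n => by
    have hle := valB_le_xB (hβ.shift (n + 1)) (hx.shift hβ (n + 1)) (ha.shift (n + 1))
    rw [mul_valB_shift hβ hx ha n, add_sub_assoc, Int.ceil_intCast_add,
      Int.ceil_eq_zero_iff.mpr ⟨by linarith [htail (n + 1)], by linarith⟩, add_zero]
  have hstate : ∀ n, lazyState β (valB β a) n = valB (shiftBase β n) (shiftWord a n) := by
    intro n
    induction n with
    | zero => simp [lazyState]
    | succ n ih =>
      rw [lazyState_succ, lazyDigit_eq_ceil, ih, hdigit, mul_valB_shift hβ hx ha n]
      ring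
  funext n
  rw [lazyDigit_eq_ceil, hstate, hdigit]

theorem mem_lazySet_of_lexLt (hβ : IsCantorBase β) (hx : XBSummable β)
    (hl : ∀ n, IsQuasiLazyExpansion (shiftBase β n) (ℓstar n)) (ha : validWord β a)
    (hlex : ∀ n, lexLt (ℓstar n) (shiftWord a n)) : a ∈ lazySet β := by
  have htail := xB_sub_one_lt_valB_shift hβ hx hl ha hlex
  refine ⟨valB β a, ⟨by simpa using htail 0, valB_le_xB hβ hx ha⟩, ?_⟩
  exact (lazyDigit_valB hβ hx ha htail).symm

theorem validWord_of_mem_lazySet (hβ : IsCantorBase β) (hx : XBSummable β)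
    (h : a ∈ lazySet β) : validWord β a := by
  obtain ⟨x, hxm, rfl⟩ := h
  exact validWord_lazyDigit hβ hx hxm

theorem lexLt_shiftWord_of_mem_lazySet (hβ : IsCantorBase β) (hx : XBSummable β)
    (hl : ∀ n, IsQuasiLazyExpansion (shiftBase β n) (ℓstar n)) (h : a ∈ lazySet β) (n : ℕ) :
    lexLt (ℓstar n) (shiftWord a n) := by
  obtain ⟨x, hxm, rfl⟩ := h
  rw [← lazyDigit_shift]
  exact (hl n).lexLt_lazyDigit (hβ.shift n) (hx.shift hβ n) (lazyState_mem_Ioc hβ hx hxm n)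

theorem closure_lazySet_subset (hβ : IsCantorBase β) (hx : XBSummable β)
    (hl : ∀ n, IsQuasiLazyExpansion (shiftBase β n) (ℓstar n)) :
    closure (lazySet β) ⊆ {a | validWord β a ∧ ∀ n, lexLe (ℓstar n) (shiftWord a n)} := by
  refine closure_minimal (fun a ha => ⟨validWord_of_mem_lazySet hβ hx ha,
    fun n => Or.inl (lexLt_shiftWord_of_mem_lazySet hβ hx hl ha n)⟩) ?_
  rw [ofPred_and, ofPred_forall]
  exact (isClosed_setOf_validWord β).inter <| isClosed_iInter fun n =>
    isClosed_lexLe continuous_const (continuous_shiftWord n)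

noncomputable def maxTail (β : ℕ → ℝ) (a : ℕ → ℤ) (K : ℕ) : ℕ → ℤ :=
  fun i => if i < K then a i else maxWord β i

theorem tendsto_maxTail (β : ℕ → ℝ) (a : ℕ → ℤ) :
    Tendsto (maxTail β a) atTop (𝓝 a) := by
  refine tendsto_pi_nhds.mpr fun i => tendsto_nhds_of_eventually_eq ?_
  filter_upwards [eventually_gt_atTop i] with K hK
  simp [maxTail, hK]

theorem le_maxTail (ha : validWord β a) (K : ℕ) : a ≤ maxTail β a K := fun i => by
  unfold maxTail
  split_ifs
  exacts [le_rfl, (ha i).2]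

theorem validWord_maxTail (hβ : IsCantorBase β) (ha : validWord β a) (K : ℕ) :
    validWord β (maxTail β a K) := fun i => by
  unfold maxTail
  split_ifs
  exacts [ha i, validWord_maxWord hβ i]

theorem mem_closure_lazySet_of_lexLe (hβ : IsCantorBase β) (hx : XBSummable β)
    (hl : ∀ n, IsQuasiLazyExpansion (shiftBase β n) (ℓstar n)) (ha : validWord β a)
    (hlex : ∀ n, lexLe (ℓstar n) (shiftWord a n)) : a ∈ closure (lazySet β) := by
  refine mem_closure_of_tendsto (tendsto_maxTail β a) (Eventually.of_forall fun K => ?_)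
  refine mem_lazySet_of_lexLt hβ hx hl (validWord_maxTail hβ ha K) fun n => ?_
  have hle : toLex (ℓstar n) ≤ toLex (shiftWord (maxTail β a K) n) :=
    (lexLe_iff_toLex_le.mp (hlex n)).trans
      (Pi.toLex_monotone fun i => le_maxTail ha K (n + i))
  refine lt_of_le_of_ne hle fun heq => ?_
  obtain ⟨i, hKi, hi⟩ := (hl n).exists_lt_maxWord (hβ.shift n) (hx.shift hβ n) K
  have := congrFun (toLex_inj.mp heq) i
  simp only [shiftWord, maxTail, show ¬ n + i < K by omega, if_false] at this
  exact hi.ne this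

end

/-- lazy Parry criterion: membership in `D'_β` and `S'_β` is
characterized lexicographically by the quasi-lazy expansions of the shifted bases. -/
theorem lazy_parry (β : ℕ → ℝ) (hβ : IsCantorBase β) (hx : XBSummable β)
    (ℓstar : ℕ → ℕ → ℤ)
    (hl : ∀ n : ℕ, Tendsto (lazyDigit (shiftBase β n))
      (nhdsWithin (xB (shiftBase β n) - 1) (Set.Ioi (xB (shiftBase β n) - 1)))
      (nhds (ℓstar n)))
    (a : ℕ → ℤ) :
    (a ∈ lazySet β ↔ validWord β a ∧ ∀ n : ℕ, lexLt (ℓstar n) (fun m => a (n + m))) ∧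
    (a ∈ closure (lazySet β) ↔ validWord β a ∧ ∀ n : ℕ, lexLe (ℓstar n) (fun m => a (n + m))) := by
  refine ⟨⟨fun h => ?_, fun ⟨ha, hlex⟩ => mem_lazySet_of_lexLt hβ hx hl ha hlex⟩,
    ⟨fun h => closure_lazySet_subset hβ hx hl h,
      fun ⟨ha, hlex⟩ => mem_closure_lazySet_of_lexLe hβ hx hl ha hlex⟩⟩
  exact ⟨validWord_of_mem_lazySet hβ hx h, lexLt_shiftWord_of_mem_lazySet hβ hx hl h⟩
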